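/- The covariance of the two correlated sampling estimators satisfies |Cov(ρ_n, ρ'_n)| ≤ √(S_ρ²(m,n) · S_{ρ'}²(m,n)), where S_ρ²(m,n) = Σ_{r=1}^{m} (1 − 1/n)^{m−r} (1/n)^r Σ_{S ⊆ R∩R', |S| = r} σ_S² and S_{ρ'}²(m,n) is defined analogously with (σ'_S)² in place of σ_S². -/

import Mathlib

open MeasureTheory ProbabilityTheory Finset

noncomputable section

variable {I : Type} [Fintype I] [DecidableEq I]

/-- Block tuples for the relations in `T`: `Π_{j∈T} Fin m_j`. -/
def Blk (m : I → ℕ) (T : Finset I) : Type := ∀ j : T, Fin (m j)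

instance (m : I → ℕ) (T : Finset I) : Fintype (Blk m T) := by unfold Blk; infer_instance
instance (m : I → ℕ) (T : Finset I) : DecidableEq (Blk m T) := by unfold Blk; infer_instance

/-- The mean of `ρ_B` over all block tuples. -/
def blkMean (m : I → ℕ) (T : Finset I) (ρB : Blk m T → ℝ) : ℝ :=
  (Fintype.card (Blk m T) : ℝ)⁻¹ * ∑ b, ρB b

/-- `b` agrees with `l` on the coordinates in `S`. -/
def Agrees (m : I → ℕ) (T S : Finset I) (l : Blk m S) (b : Blk m T) : Prop :=
  ∀ (j : I) (hjS : j ∈ S) (hjT : j ∈ T), b ⟨j, hjT⟩ = l ⟨j, hjS⟩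

instance (m : I → ℕ) (T S : Finset I) (l : Blk m S) :
    DecidablePred (Agrees m T S l) := fun b => by unfold Agrees; infer_instance

/-- `ρ_S(l)`: the average of `ρ_B` over all block tuples agreeing with `l` on `S`. -/
def rhoS (m : I → ℕ) (T : Finset I) (ρB : Blk m T → ℝ) (S : Finset I) (l : Blk m S) : ℝ :=
  ((Finset.univ.filter (Agrees m T S l)).card : ℝ)⁻¹ *
    ∑ b ∈ Finset.univ.filter (Agrees m T S l), ρB b

/-- `σ_S² = |Λ(S)|⁻¹ Σ_{l∈Λ(S)} (ρ_S(l) − ρ)²`. -/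
def sigmaSq (m : I → ℕ) (T : Finset I) (ρB : Blk m T → ℝ) (S : Finset I) : ℝ :=
  (Fintype.card (Blk m S) : ℝ)⁻¹ *
    ∑ l : Blk m S, (rhoS m T ρB S l - blkMean m T ρB) ^ 2

/-- `Cov_S(ρ, ρ') = |Λ(S)|⁻¹ Σ_{l∈Λ(S)} (ρ_S(l) − ρ)(ρ'_S(l) − ρ')`. -/
def covS (m : I → ℕ) (T T' : Finset I) (ρB : Blk m T → ℝ) (ρB' : Blk m T' → ℝ)
    (S : Finset I) : ℝ :=
  (Fintype.card (Blk m S) : ℝ)⁻¹ *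
    ∑ l : Blk m S,
      (rhoS m T ρB S l - blkMean m T ρB) * (rhoS m T' ρB' S l - blkMean m T' ρB')

/-- The sample space `Π_{j∈U} Π_{i=1}^{n} Fin m_j`. -/
def Samp (n : ℕ) (m : I → ℕ) (U : Finset I) : Type := ∀ j : U, Fin n → Fin (m j)

instance (n : ℕ) (m : I → ℕ) (U : Finset I) : Fintype (Samp n m U) := by
  unfold Samp; infer_instance
instance (n : ℕ) (m : I → ℕ) (U : Finset I) : MeasurableSpace (Samp n m U) := ⊤

/-- The uniform probability measure on the sample space. -/
def unif (n : ℕ) (m : I → ℕ) (U : Finset I) : Measure (Samp n m U) :=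
  (Fintype.card (Samp n m U) : ENNReal)⁻¹ • Measure.count

/-- The sampling estimator `ρ_n` for the relations in `T ⊆ U`. -/
def est (n : ℕ) (m : I → ℕ) {U : Finset I} (T : Finset I) (hTU : T ⊆ U)
    (ρB : Blk m T → ℝ) (ω : Samp n m U) : ℝ :=
  ((n : ℝ) ^ T.card)⁻¹ * ∑ i : T → Fin n, ρB fun j => ω ⟨j, hTU j.2⟩ (i j)

/-- Covariance of two real random variables. -/
def cov {Ω : Type*} [MeasurableSpace Ω] (μ : Measure Ω) (X Y : Ω → ℝ) : ℝ :=
  ∫ ω, (X ω - ∫ x, X x ∂μ) * (Y ω - ∫ x, Y x ∂μ) ∂μ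

/-- `S_ρ²(m,n) = Σ_{r=1}^{m} (1 − 1/n)^{m−r} (1/n)^r Σ_{S ⊆ M, |S| = r} σ_S²`,
where `M = R ∩ R'` in the applications below. -/
def Ssq (n : ℕ) (m : I → ℕ) (T : Finset I) (ρB : Blk m T → ℝ) (M : Finset I) : ℝ :=
  ∑ r ∈ Finset.Icc 1 M.card,
    (1 - (n : ℝ)⁻¹) ^ (M.card - r) * ((n : ℝ)⁻¹) ^ r *
      ∑ S ∈ M.powerset.filter (fun S => S.card = r), sigmaSq m T ρB S

set_option linter.unusedSectionVars false
/-! ### Auxiliary general lemmas -/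

lemma card_eq_of_invol {α : Type*} (s t : Finset α) (e : α → α)
    (he : ∀ a, e (e a) = a) (hst : ∀ a ∈ s, e a ∈ t) (hts : ∀ a ∈ t, e a ∈ s) :
    s.card = t.card :=
  Finset.card_bij' (fun a _ => e a) (fun a _ => e a) hst hts
    (fun a _ => he a) (fun a _ => he a)

lemma unif_comp {α β : Type*} [Fintype α] [Fintype β] [DecidableEq β]
    (hα : Fintype.card α ≠ 0) (Φ : α → β) (t : Finset β) (hmem : ∀ a, Φ a ∈ t)
    (hfib : ∀ b₁ ∈ t, ∀ b₂ ∈ t,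
      (univ.filter fun a => Φ a = b₁).card = (univ.filter fun a => Φ a = b₂).card)
    (f : β → ℝ) :
    (Fintype.card α : ℝ)⁻¹ * ∑ a, f (Φ a) = (t.card : ℝ)⁻¹ * ∑ b ∈ t, f b := by
  have hne : Nonempty α := Fintype.card_pos_iff.mp (Nat.pos_of_ne_zero hα)
  obtain ⟨a₀⟩ := hne
  set c := (univ.filter fun a => Φ a = Φ a₀).card with hc_def
  have hc : ∀ b ∈ t, (univ.filter fun a => Φ a = b).card = c :=
    fun b hb => hfib b hb _ (hmem a₀)
  have hsum : ∑ a, f (Φ a) = (c : ℝ) * ∑ b ∈ t, f b := by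
    rw [← Finset.sum_fiberwise_of_maps_to (fun a _ => hmem a) (fun a => f (Φ a)),
      Finset.mul_sum]
    refine Finset.sum_congr rfl fun b hb => ?_
    have h1 : ∑ a ∈ univ.filter fun a => Φ a = b, f (Φ a)
        = ∑ _a ∈ univ.filter fun a => Φ a = b, f b :=
      Finset.sum_congr rfl fun a ha => by rw [(Finset.mem_filter.mp ha).2]
    rw [h1, Finset.sum_const, hc b hb, nsmul_eq_mul]
  have hcard : (Fintype.card α : ℕ) = t.card * c := by
    rw [← Finset.card_univ, Finset.card_eq_sum_card_fiberwise (fun a _ => hmem a),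
      Finset.sum_congr rfl hc, Finset.sum_const, smul_eq_mul]
  have hc0 : c ≠ 0 := by intro h; rw [h, Nat.mul_zero] at hcard; exact hα hcard
  have ht0 : t.card ≠ 0 := by
    intro h; rw [h, Nat.zero_mul] at hcard; exact hα hcard
  rw [hsum, hcard]
  push_cast
  have hcR : (c : ℝ) ≠ 0 := Nat.cast_ne_zero.mpr hc0
  have htR : (t.card : ℝ) ≠ 0 := Nat.cast_ne_zero.mpr ht0
  field_simp

lemma unif_comp_univ {α β : Type*} [Fintype α] [Fintype β] [DecidableEq β]
    (hα : Fintype.card α ≠ 0) (Φ : α → β)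
    (hfib : ∀ b₁ b₂ : β,
      (univ.filter fun a => Φ a = b₁).card = (univ.filter fun a => Φ a = b₂).card)
    (f : β → ℝ) :
    (Fintype.card α : ℝ)⁻¹ * ∑ a, f (Φ a) = (Fintype.card β : ℝ)⁻¹ * ∑ b, f b := by
  have := unif_comp hα Φ univ (fun _ => mem_univ _)
    (fun b₁ _ b₂ _ => hfib b₁ b₂) f
  simpa [Finset.card_univ] using this

lemma sum_sqrt_mul_le {γ : Type*} (s : Finset γ) (a b : γ → ℝ)
    (ha : ∀ x ∈ s, 0 ≤ a x) (hb : ∀ x ∈ s, 0 ≤ b x) :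
    ∑ x ∈ s, Real.sqrt (a x * b x) ≤ Real.sqrt ((∑ x ∈ s, a x) * ∑ x ∈ s, b x) := by
  rw [Real.le_sqrt (Finset.sum_nonneg fun x _ => Real.sqrt_nonneg _)
    (mul_nonneg (Finset.sum_nonneg ha) (Finset.sum_nonneg hb))]
  have h1 : ∀ x ∈ s, Real.sqrt (a x * b x) = Real.sqrt (a x) * Real.sqrt (b x) :=
    fun x hx => Real.sqrt_mul (ha x hx) _
  rw [Finset.sum_congr rfl h1]
  calc (∑ x ∈ s, Real.sqrt (a x) * Real.sqrt (b x)) ^ 2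
      ≤ (∑ x ∈ s, Real.sqrt (a x) ^ 2) * ∑ x ∈ s, Real.sqrt (b x) ^ 2 :=
        Finset.sum_mul_sq_le_sq_mul_sq s _ _
    _ = (∑ x ∈ s, a x) * ∑ x ∈ s, b x := by
        rw [Finset.sum_congr rfl fun x hx => Real.sq_sqrt (ha x hx),
          Finset.sum_congr rfl fun x hx => Real.sq_sqrt (hb x hx)]
/-! ### Lemmas about `Agrees`, `rhoS`, `sigmaSq`, `covS` -/

lemma agrees_card (m : I → ℕ) (T S : Finset I) (l₁ l₂ : Blk m S) :
    (univ.filter (Agrees m T S l₁)).card = (univ.filter (Agrees m T S l₂)).card := by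
  classical
  set e : Blk m T → Blk m T := fun b j =>
    if h : (j : I) ∈ S then Equiv.swap (l₁ ⟨j, h⟩) (l₂ ⟨j, h⟩) (b j) else b j with he_def
  have hinv : ∀ b, e (e b) = b := by
    intro b; funext j
    by_cases h : (j : I) ∈ S <;> simp [he_def, h]
  have h12 : ∀ b, Agrees m T S l₁ b → Agrees m T S l₂ (e b) := by
    intro b hb j hjS hjT
    show (if h : ((⟨j, hjT⟩ : T) : I) ∈ S then _ else _) = _
    rw [dif_pos hjS, hb j hjS hjT, Equiv.swap_apply_left]
  have h21 : ∀ b, Agrees m T S l₂ b → Agrees m T S l₁ (e b) := by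
    intro b hb j hjS hjT
    show (if h : ((⟨j, hjT⟩ : T) : I) ∈ S then _ else _) = _
    rw [dif_pos hjS, hb j hjS hjT, Equiv.swap_apply_right]
  exact card_eq_of_invol _ _ e hinv
    (fun b hb => mem_filter.2 ⟨mem_univ _, h12 b (mem_filter.1 hb).2⟩)
    (fun b hb => mem_filter.2 ⟨mem_univ _, h21 b (mem_filter.1 hb).2⟩)

lemma agrees_nonempty (m : I → ℕ) (hm : ∀ j, 1 ≤ m j) (T S : Finset I) (l : Blk m S) :
    (univ.filter (Agrees m T S l)).Nonempty := by
  classical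
  refine ⟨fun j => if h : (j : I) ∈ S then l ⟨j, h⟩ else ⟨0, hm j⟩,
    mem_filter.2 ⟨mem_univ _, ?_⟩⟩
  intro j hjS hjT
  show (if h : ((⟨j, hjT⟩ : T) : I) ∈ S then _ else _) = _
  rw [dif_pos hjS]

lemma sum_agrees_sub (m : I → ℕ) (T S : Finset I) (ρB : Blk m T → ℝ) (l : Blk m S)
    (h0 : (univ.filter (Agrees m T S l)).card ≠ 0) :
    ∑ b ∈ univ.filter (Agrees m T S l), (ρB b - blkMean m T ρB)
      = ((univ.filter (Agrees m T S l)).card : ℝ)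
        * (rhoS m T ρB S l - blkMean m T ρB) := by
  have hcR : ((univ.filter (Agrees m T S l)).card : ℝ) ≠ 0 := Nat.cast_ne_zero.mpr h0
  rw [Finset.sum_sub_distrib, Finset.sum_const, nsmul_eq_mul, rhoS]
  field_simp

lemma rhoS_empty (m : I → ℕ) (T : Finset I) (ρB : Blk m T → ℝ) (l : Blk m (∅ : Finset I)) :
    rhoS m T ρB ∅ l = blkMean m T ρB := by
  have h : (univ.filter (Agrees m T ∅ l)) = univ :=
    Finset.filter_true_of_mem fun b _ j hjS hjT => (Finset.notMem_empty j hjS).elim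
  rw [rhoS, h, Finset.card_univ, blkMean]

lemma sigmaSq_empty (m : I → ℕ) (T : Finset I) (ρB : Blk m T → ℝ) :
    sigmaSq m T ρB ∅ = 0 := by
  rw [sigmaSq]
  rw [Finset.sum_eq_zero fun l _ => by rw [rhoS_empty, sub_self]; ring]
  ring

lemma sigmaSq_nonneg (m : I → ℕ) (T : Finset I) (ρB : Blk m T → ℝ) (S : Finset I) :
    0 ≤ sigmaSq m T ρB S :=
  mul_nonneg (by positivity) (Finset.sum_nonneg fun l _ => sq_nonneg _)

lemma abs_covS_le (m : I → ℕ) (R R' : Finset I) (ρB : Blk m R → ℝ) (ρB' : Blk m R' → ℝ)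
    (S : Finset I) :
    |covS m R R' ρB ρB' S|
      ≤ Real.sqrt (sigmaSq m R ρB S * sigmaSq m R' ρB' S) := by
  set c : ℝ := (Fintype.card (Blk m S) : ℝ)⁻¹ with hc
  have hc0 : 0 ≤ c := by positivity
  set x : Blk m S → ℝ := fun l => rhoS m R ρB S l - blkMean m R ρB
  set y : Blk m S → ℝ := fun l => rhoS m R' ρB' S l - blkMean m R' ρB'
  have h1 : |covS m R R' ρB ρB' S| = c * |∑ l, x l * y l| := by
    rw [covS, abs_mul, abs_of_nonneg hc0]
  have h2 : |∑ l, x l * y l| ≤ Real.sqrt ((∑ l, x l ^ 2) * ∑ l, y l ^ 2) := by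
    rw [← Real.sqrt_sq_eq_abs]
    exact Real.sqrt_le_sqrt (Finset.sum_mul_sq_le_sq_mul_sq univ x y)
  have h3 : c * Real.sqrt ((∑ l, x l ^ 2) * ∑ l, y l ^ 2)
      = Real.sqrt (sigmaSq m R ρB S * sigmaSq m R' ρB' S) := by
    rw [sigmaSq, sigmaSq, ← hc]
    rw [show c * (∑ l, x l ^ 2) * (c * ∑ l, y l ^ 2)
        = c ^ 2 * ((∑ l, x l ^ 2) * ∑ l, y l ^ 2) by ring]
    rw [Real.sqrt_mul (sq_nonneg c), Real.sqrt_sq hc0]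
  calc |covS m R R' ρB ρB' S| = c * |∑ l, x l * y l| := h1
    _ ≤ c * Real.sqrt ((∑ l, x l ^ 2) * ∑ l, y l ^ 2) := by
        exact mul_le_mul_of_nonneg_left h2 hc0
    _ = _ := h3
/-! ### Sampling space lemmas -/

lemma samp_nonempty (n : ℕ) (m : I → ℕ) (hm : ∀ j, 1 ≤ m j) (U : Finset I) :
    Nonempty (Samp n m U) := ⟨fun j _ => ⟨0, hm j⟩⟩

/-- Evaluation of a sample at the index tuple `i`. -/
def evalS (n : ℕ) (m : I → ℕ) {U : Finset I} (T : Finset I) (hTU : T ⊆ U)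
    (i : T → Fin n) (ω : Samp n m U) : Blk m T :=
  fun j => ω ⟨j, hTU j.2⟩ (i j)

lemma est_eq (n : ℕ) (m : I → ℕ) {U : Finset I} (T : Finset I) (hTU : T ⊆ U)
    (ρB : Blk m T → ℝ) (ω : Samp n m U) :
    est n m T hTU ρB ω
      = ((n : ℝ) ^ T.card)⁻¹ * ∑ i : T → Fin n, ρB (evalS n m T hTU i ω) := rfl

lemma eval_fiber_card (n : ℕ) (m : I → ℕ) {U : Finset I} (T : Finset I) (hTU : T ⊆ U)
    (i : T → Fin n) (b₁ b₂ : Blk m T) :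
    (univ.filter fun ω : Samp n m U => evalS n m T hTU i ω = b₁).card
      = (univ.filter fun ω : Samp n m U => evalS n m T hTU i ω = b₂).card := by
  classical
  set e : Samp n m U → Samp n m U := fun ω j p =>
    if h : (j : I) ∈ T then
      if p = i ⟨j, h⟩ then Equiv.swap (b₁ ⟨j, h⟩) (b₂ ⟨j, h⟩) (ω j p) else ω j p
    else ω j p with he_def
  have hinv : ∀ ω, e (e ω) = ω := by
    intro ω; funext j p
    by_cases h : (j : I) ∈ T
    · by_cases hp : p = i ⟨j, h⟩ <;> simp [he_def, h, hp]
    · simp [he_def, h]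
  have key : ∀ (ω : Samp n m U) (j : T), evalS n m T hTU i (e ω) j
      = Equiv.swap (b₁ j) (b₂ j) (evalS n m T hTU i ω j) := by
    intro ω j
    show (if h : ((⟨(j : I), hTU j.2⟩ : U) : I) ∈ T then _ else _) = _
    rw [dif_pos j.2, if_pos rfl]; rfl
  have h12 : ∀ ω, evalS n m T hTU i ω = b₁ → evalS n m T hTU i (e ω) = b₂ := by
    intro ω hω; funext j
    rw [key ω j, hω, Equiv.swap_apply_left]
  have h21 : ∀ ω, evalS n m T hTU i ω = b₂ → evalS n m T hTU i (e ω) = b₁ := by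
    intro ω hω; funext j
    rw [key ω j, hω, Equiv.swap_apply_right]
  exact card_eq_of_invol _ _ e hinv
    (fun ω hω => mem_filter.2 ⟨mem_univ _, h12 ω (mem_filter.1 hω).2⟩)
    (fun ω hω => mem_filter.2 ⟨mem_univ _, h21 ω (mem_filter.1 hω).2⟩)

lemma eval_avg (n : ℕ) (m : I → ℕ) (hm : ∀ j, 1 ≤ m j) {U : Finset I} (T : Finset I)
    (hTU : T ⊆ U) (i : T → Fin n) (f : Blk m T → ℝ) :
    (Fintype.card (Samp n m U) : ℝ)⁻¹ * ∑ ω : Samp n m U, f (evalS n m T hTU i ω)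
      = (Fintype.card (Blk m T) : ℝ)⁻¹ * ∑ b, f b := by
  haveI := samp_nonempty n m hm U
  exact unif_comp_univ Fintype.card_ne_zero (evalS n m T hTU i)
    (eval_fiber_card n m T hTU i) f
/-! ### Pairs of evaluations -/

/-- Compatibility of a pair of block tuples w.r.t. index tuples `i, i'`. -/
def Compat (n : ℕ) (m : I → ℕ) (R R' : Finset I) (i : R → Fin n) (i' : R' → Fin n)
    (p : Blk m R × Blk m R') : Prop :=
  ∀ (j : I) (hR : j ∈ R) (hR' : j ∈ R'),
    i ⟨j, hR⟩ = i' ⟨j, hR'⟩ → p.1 ⟨j, hR⟩ = p.2 ⟨j, hR'⟩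

open Classical in
/-- The set of compatible pairs. -/
def FF (n : ℕ) (m : I → ℕ) (R R' : Finset I) (i : R → Fin n) (i' : R' → Fin n) :
    Finset (Blk m R × Blk m R') :=
  univ.filter (Compat n m R R' i i')

open Classical in
/-- The set of relations on which `i` and `i'` collide. -/
def matchSet (n : ℕ) (R R' : Finset I) (i : R → Fin n) (i' : R' → Fin n) : Finset I :=
  (R ∩ R').filter fun j => ∀ (hR : j ∈ R) (hR' : j ∈ R'), i ⟨j, hR⟩ = i' ⟨j, hR'⟩

lemma matchSet_subset_left (n : ℕ) (R R' : Finset I) (i : R → Fin n) (i' : R' → Fin n) :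
    matchSet n R R' i i' ⊆ R :=
  (Finset.filter_subset _ _).trans Finset.inter_subset_left

lemma matchSet_subset_right (n : ℕ) (R R' : Finset I) (i : R → Fin n) (i' : R' → Fin n) :
    matchSet n R R' i i' ⊆ R' :=
  (Finset.filter_subset _ _).trans Finset.inter_subset_right

lemma pair_fiber_card (n : ℕ) (m : I → ℕ) (R R' : Finset I)
    (i : R → Fin n) (i' : R' → Fin n)
    (p₁ p₂ : Blk m R × Blk m R')
    (hc₁ : Compat n m R R' i i' p₁) (hc₂ : Compat n m R R' i i' p₂) :
    (univ.filter fun ω : Samp n m (R ∪ R') =>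
        (evalS n m R Finset.subset_union_left i ω,
         evalS n m R' Finset.subset_union_right i' ω) = p₁).card
    = (univ.filter fun ω : Samp n m (R ∪ R') =>
        (evalS n m R Finset.subset_union_left i ω,
         evalS n m R' Finset.subset_union_right i' ω) = p₂).card := by
  classical
  set e : Samp n m (R ∪ R') → Samp n m (R ∪ R') := fun ω j q =>
    if hR : (j : I) ∈ R then
      if q = i ⟨j, hR⟩ then Equiv.swap (p₁.1 ⟨j, hR⟩) (p₂.1 ⟨j, hR⟩) (ω j q)
      else if hR' : (j : I) ∈ R' then
        if q = i' ⟨j, hR'⟩ then Equiv.swap (p₁.2 ⟨j, hR'⟩) (p₂.2 ⟨j, hR'⟩) (ω j q)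
        else ω j q
      else ω j q
    else if hR' : (j : I) ∈ R' then
      if q = i' ⟨j, hR'⟩ then Equiv.swap (p₁.2 ⟨j, hR'⟩) (p₂.2 ⟨j, hR'⟩) (ω j q)
      else ω j q
    else ω j q with he_def
  have hinv : ∀ ω, e (e ω) = ω := by
    intro ω; funext j q
    by_cases hR : (j : I) ∈ R
    · by_cases hq : q = i ⟨j, hR⟩
      · simp [he_def, hR, hq]
      · by_cases hR' : (j : I) ∈ R'
        · by_cases hq' : q = i' ⟨j, hR'⟩
          · simp [he_def, hR, hR', hq',
              show ¬ i' ⟨(j : I), hR'⟩ = i ⟨(j : I), hR⟩ from hq' ▸ hq]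
          · simp [he_def, hR, hq, hR', hq']
        · simp [he_def, hR, hq, hR']
    · by_cases hR' : (j : I) ∈ R'
      · by_cases hq' : q = i' ⟨j, hR'⟩ <;> simp [he_def, hR, hR', hq']
      · simp [he_def, hR, hR']
  have keyA : ∀ (ω : Samp n m (R ∪ R')) (j : R),
      evalS n m R Finset.subset_union_left i (e ω) j
        = Equiv.swap (p₁.1 j) (p₂.1 j)
            (evalS n m R Finset.subset_union_left i ω j) := by
    intro ω j
    show (if hR : ((⟨(j : I), _⟩ : (R ∪ R' : Finset I)) : I) ∈ R then _ else _) = _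
    rw [dif_pos j.2, if_pos rfl]; rfl
  have keyB : ∀ (ω : Samp n m (R ∪ R')) (j : R'),
      evalS n m R' Finset.subset_union_right i' (e ω) j
        = Equiv.swap (p₁.2 j) (p₂.2 j)
            (evalS n m R' Finset.subset_union_right i' ω j) := by
    intro ω j
    show (if hR : ((⟨(j : I), _⟩ : (R ∪ R' : Finset I)) : I) ∈ R then _ else _) = _
    by_cases hR : (j : I) ∈ R
    · rw [dif_pos hR]
      by_cases hq : i' j = i ⟨(j : I), hR⟩
      · rw [if_pos hq]
        have h1 : p₁.1 ⟨(j : I), hR⟩ = p₁.2 j := hc₁ j hR j.2 hq.symm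
        have h2 : p₂.1 ⟨(j : I), hR⟩ = p₂.2 j := hc₂ j hR j.2 hq.symm
        rw [h1, h2]; rfl
      · rw [if_neg hq, dif_pos j.2, if_pos rfl]; rfl
    · rw [dif_neg hR, dif_pos j.2, if_pos rfl]; rfl
  have h12 : ∀ ω, (evalS n m R Finset.subset_union_left i ω,
      evalS n m R' Finset.subset_union_right i' ω) = p₁ →
      (evalS n m R Finset.subset_union_left i (e ω),
      evalS n m R' Finset.subset_union_right i' (e ω)) = p₂ := by
    intro ω hω
    have hω1 : evalS n m R Finset.subset_union_left i ω = p₁.1 := congrArg Prod.fst hω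
    have hω2 : evalS n m R' Finset.subset_union_right i' ω = p₁.2 := congrArg Prod.snd hω
    have g1 : evalS n m R Finset.subset_union_left i (e ω) = p₂.1 := by
      funext j; rw [keyA ω j, hω1, Equiv.swap_apply_left]
    have g2 : evalS n m R' Finset.subset_union_right i' (e ω) = p₂.2 := by
      funext j; rw [keyB ω j, hω2, Equiv.swap_apply_left]
    rw [g1, g2]
  have h21 : ∀ ω, (evalS n m R Finset.subset_union_left i ω,
      evalS n m R' Finset.subset_union_right i' ω) = p₂ →
      (evalS n m R Finset.subset_union_left i (e ω),
      evalS n m R' Finset.subset_union_right i' (e ω)) = p₁ := by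
    intro ω hω
    have hω1 : evalS n m R Finset.subset_union_left i ω = p₂.1 := congrArg Prod.fst hω
    have hω2 : evalS n m R' Finset.subset_union_right i' ω = p₂.2 := congrArg Prod.snd hω
    have g1 : evalS n m R Finset.subset_union_left i (e ω) = p₁.1 := by
      funext j; rw [keyA ω j, hω1, Equiv.swap_apply_right]
    have g2 : evalS n m R' Finset.subset_union_right i' (e ω) = p₁.2 := by
      funext j; rw [keyB ω j, hω2, Equiv.swap_apply_right]
    rw [g1, g2]
  exact card_eq_of_invol _ _ e hinv
    (fun ω hω => mem_filter.2 ⟨mem_univ _, h12 ω (mem_filter.1 hω).2⟩)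
    (fun ω hω => mem_filter.2 ⟨mem_univ _, h21 ω (mem_filter.1 hω).2⟩)

lemma pair_avg (n : ℕ) (m : I → ℕ) (hm : ∀ j, 1 ≤ m j) (R R' : Finset I)
    (i : R → Fin n) (i' : R' → Fin n) (g : Blk m R × Blk m R' → ℝ) :
    (Fintype.card (Samp n m (R ∪ R')) : ℝ)⁻¹ *
      ∑ ω : Samp n m (R ∪ R'),
        g (evalS n m R Finset.subset_union_left i ω,
           evalS n m R' Finset.subset_union_right i' ω)
    = ((FF n m R R' i i').card : ℝ)⁻¹ * ∑ p ∈ FF n m R R' i i', g p := by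
  classical
  haveI := samp_nonempty n m hm (R ∪ R')
  refine unif_comp Fintype.card_ne_zero _ (FF n m R R' i i') (fun ω => ?_)
    (fun p₁ h₁ p₂ h₂ => ?_) g
  · rw [FF, mem_filter]
    refine ⟨mem_univ _, fun j hR hR' heq => ?_⟩
    show ω ⟨j, Finset.mem_union_left _ hR⟩ (i ⟨j, hR⟩)
        = ω ⟨j, Finset.mem_union_right _ hR'⟩ (i' ⟨j, hR'⟩)
    exact congrArg _ heq
  · rw [FF, mem_filter] at h₁ h₂
    exact pair_fiber_card n m R R' i i' p₁ p₂ h₁.2 h₂.2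
/-! ### Average over compatible pairs equals `covS` -/

lemma FF_avg (n : ℕ) (m : I → ℕ) (hm : ∀ j, 1 ≤ m j) (R R' : Finset I)
    (i : R → Fin n) (i' : R' → Fin n) (ρB : Blk m R → ℝ) (ρB' : Blk m R' → ℝ) :
    ((FF n m R R' i i').card : ℝ)⁻¹ *
      ∑ p ∈ FF n m R R' i i',
        (ρB p.1 - blkMean m R ρB) * (ρB' p.2 - blkMean m R' ρB')
    = covS m R R' ρB ρB' (matchSet n R R' i i') := by
  classical
  set S : Finset I := matchSet n R R' i i' with hS_def
  have hSR : S ⊆ R := matchSet_subset_left n R R' i i'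
  have hSR' : S ⊆ R' := matchSet_subset_right n R R' i i'
  set res : Blk m R × Blk m R' → Blk m S := fun p j => p.1 ⟨j, hSR j.2⟩ with hres_def
  -- the fibers of `res` on `FF` are products of agreement classes
  have hprod : ∀ l : Blk m S, (FF n m R R' i i').filter (fun p => res p = l)
      = (univ.filter (Agrees m R S l)) ×ˢ (univ.filter (Agrees m R' S l)) := by
    intro l
    ext p
    simp only [mem_filter, mem_product, mem_univ, true_and, FF]
    constructor
    · rintro ⟨hcomp, hres⟩
      constructor
      · intro j hjS hjR
        exact congrFun hres ⟨j, hjS⟩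
      · intro j hjS hjR'
        have hjR : j ∈ R := hSR hjS
        have hij : i ⟨j, hjR⟩ = i' ⟨j, hjR'⟩ := by
          have hj2 := (Finset.mem_filter.mp hjS).2
          exact hj2 hjR hjR'
        calc p.2 ⟨j, hjR'⟩ = p.1 ⟨j, hjR⟩ := (hcomp j hjR hjR' hij).symm
          _ = l ⟨j, hjS⟩ := congrFun hres ⟨j, hjS⟩
    · rintro ⟨h1, h2⟩
      refine ⟨?_, ?_⟩
      · intro j hjR hjR' hij
        have hjS : j ∈ S := by
          rw [hS_def, matchSet, Finset.mem_filter]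
          exact ⟨Finset.mem_inter.2 ⟨hjR, hjR'⟩, fun h h' => hij⟩
        rw [h1 j hjS hjR, h2 j hjS hjR']
      · funext j
        exact h1 j j.2 (hSR j.2)
  -- cardinalities of agreement classes
  haveI : Nonempty (Blk m S) := ⟨fun j => ⟨0, hm j⟩⟩
  obtain ⟨l₀⟩ := ‹Nonempty (Blk m S)›
  set a : ℕ := (univ.filter (Agrees m R S l₀)).card with ha_def
  set a' : ℕ := (univ.filter (Agrees m R' S l₀)).card with ha'_def
  have haL : ∀ l : Blk m S, (univ.filter (Agrees m R S l)).card = a :=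
    fun l => agrees_card m R S l l₀
  have haL' : ∀ l : Blk m S, (univ.filter (Agrees m R' S l)).card = a' :=
    fun l => agrees_card m R' S l l₀
  have ha0 : a ≠ 0 :=
    Finset.card_ne_zero_of_mem (agrees_nonempty m hm R S l₀).choose_spec
  have ha'0 : a' ≠ 0 :=
    Finset.card_ne_zero_of_mem (agrees_nonempty m hm R' S l₀).choose_spec
  -- the cardinality of FF
  have hFFcard : (FF n m R R' i i').card = Fintype.card (Blk m S) * (a * a') := by
    rw [Finset.card_eq_sum_card_fiberwise
      (f := res) (t := univ) (fun p _ => mem_univ _)]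
    have : ∀ l : Blk m S, ((FF n m R R' i i').filter (fun p => res p = l)).card = a * a' := by
      intro l
      rw [hprod l, Finset.card_product, haL l, haL' l]
    rw [Finset.sum_congr rfl fun l _ => this l, Finset.sum_const, smul_eq_mul,
      Finset.card_univ]
  -- the sum over FF
  have hsum : ∑ p ∈ FF n m R R' i i',
      (ρB p.1 - blkMean m R ρB) * (ρB' p.2 - blkMean m R' ρB')
      = ∑ l : Blk m S, ((a : ℝ) * (rhoS m R ρB S l - blkMean m R ρB))
          * ((a' : ℝ) * (rhoS m R' ρB' S l - blkMean m R' ρB')) := by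
    rw [← Finset.sum_fiberwise_of_maps_to (g := res) (t := univ) (fun p _ => mem_univ _)]
    refine Finset.sum_congr rfl fun l _ => ?_
    rw [hprod l, Finset.sum_product]
    have h1 : ∀ b ∈ univ.filter (Agrees m R S l),
        ∑ b' ∈ univ.filter (Agrees m R' S l),
          (ρB b - blkMean m R ρB) * (ρB' b' - blkMean m R' ρB')
        = (ρB b - blkMean m R ρB) *
            ((a' : ℝ) * (rhoS m R' ρB' S l - blkMean m R' ρB')) := by
      intro b _
      rw [← Finset.mul_sum, sum_agrees_sub m R' S ρB' l (by rw [haL' l]; exact ha'0), haL' l]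
    rw [Finset.sum_congr rfl h1, ← Finset.sum_mul,
      sum_agrees_sub m R S ρB l (by rw [haL l]; exact ha0), haL l]
  rw [hsum, hFFcard, covS]
  have haR : (a : ℝ) ≠ 0 := Nat.cast_ne_zero.mpr ha0
  have ha'R : (a' : ℝ) ≠ 0 := Nat.cast_ne_zero.mpr ha'0
  have hcard0 : (Fintype.card (Blk m S) : ℝ) ≠ 0 :=
    Nat.cast_ne_zero.mpr Fintype.card_ne_zero
  push_cast
  rw [Finset.mul_sum, Finset.mul_sum]
  refine Finset.sum_congr rfl fun l _ => ?_
  field_simp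
/-! ### Restriction of index tuples and the counting lemma -/

lemma restrict_fiber_card (n : ℕ) (T M : Finset I) (hMT : M ⊆ T)
    (u₁ u₂ : M → Fin n) :
    (univ.filter fun i : T → Fin n => (fun j : M => i ⟨j, hMT j.2⟩) = u₁).card
      = (univ.filter fun i : T → Fin n => (fun j : M => i ⟨j, hMT j.2⟩) = u₂).card := by
  classical
  set e : (T → Fin n) → (T → Fin n) := fun i j =>
    if h : (j : I) ∈ M then Equiv.swap (u₁ ⟨j, h⟩) (u₂ ⟨j, h⟩) (i j) else i j with he_def
  have hinv : ∀ i, e (e i) = i := by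
    intro i; funext j
    by_cases h : (j : I) ∈ M <;> simp [he_def, h]
  have key : ∀ (i : T → Fin n) (j : M),
      e i ⟨j, hMT j.2⟩ = Equiv.swap (u₁ j) (u₂ j) (i ⟨j, hMT j.2⟩) := by
    intro i j
    show (if h : ((⟨(j : I), hMT j.2⟩ : T) : I) ∈ M then _ else _) = _
    rw [dif_pos j.2]
  have h12 : ∀ i, (fun j : M => i ⟨j, hMT j.2⟩) = u₁ →
      (fun j : M => e i ⟨j, hMT j.2⟩) = u₂ := by
    intro i hi; funext j
    rw [key i j, show i ⟨(j : I), hMT j.2⟩ = u₁ j from congrFun hi j, Equiv.swap_apply_left]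
  have h21 : ∀ i, (fun j : M => i ⟨j, hMT j.2⟩) = u₂ →
      (fun j : M => e i ⟨j, hMT j.2⟩) = u₁ := by
    intro i hi; funext j
    rw [key i j, show i ⟨(j : I), hMT j.2⟩ = u₂ j from congrFun hi j, Equiv.swap_apply_right]
  exact card_eq_of_invol _ _ e hinv
    (fun i hi => mem_filter.2 ⟨mem_univ _, h12 i (mem_filter.1 hi).2⟩)
    (fun i hi => mem_filter.2 ⟨mem_univ _, h21 i (mem_filter.1 hi).2⟩)

lemma restrict_avg (n : ℕ) (hn : 1 ≤ n) (T M : Finset I) (hMT : M ⊆ T)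
    (f : (M → Fin n) → ℝ) :
    ((n : ℝ) ^ T.card)⁻¹ * ∑ i : T → Fin n, f (fun j : M => i ⟨j, hMT j.2⟩)
      = ((n : ℝ) ^ M.card)⁻¹ * ∑ u : M → Fin n, f u := by
  classical
  have hcT : Fintype.card (T → Fin n) = n ^ T.card := by
    rw [Fintype.card_fun, Fintype.card_fin, Fintype.card_coe]
  have hcM : Fintype.card (M → Fin n) = n ^ M.card := by
    rw [Fintype.card_fun, Fintype.card_fin, Fintype.card_coe]
  have hα : Fintype.card (T → Fin n) ≠ 0 := by
    rw [hcT]; exact pow_ne_zero _ (by omega)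
  have := unif_comp_univ hα (fun i (j : M) => i ⟨j, hMT j.2⟩)
    (restrict_fiber_card n T M hMT) f
  rw [hcT, hcM] at this
  push_cast at this
  exact this

open Classical in
/-- The match set of two index tuples on `M` itself. -/
def matchSetM (n : ℕ) (M : Finset I) (u u' : M → Fin n) : Finset I :=
  M.filter fun j => ∀ h : j ∈ M, u ⟨j, h⟩ = u' ⟨j, h⟩

lemma mem_matchSetM (n : ℕ) (M : Finset I) (u u' : M → Fin n) (j : I) :
    j ∈ matchSetM n M u u' ↔ j ∈ M ∧ ∀ h : j ∈ M, u ⟨j, h⟩ = u' ⟨j, h⟩ := by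
  unfold matchSetM; exact Finset.mem_filter

lemma matchSet_eq_matchSetM (n : ℕ) (R R' : Finset I) (i : R → Fin n) (i' : R' → Fin n) :
    matchSet n R R' i i'
      = matchSetM n (R ∩ R')
          (fun j => i ⟨j, Finset.inter_subset_left j.2⟩)
          (fun j => i' ⟨j, Finset.inter_subset_right j.2⟩) := by
  classical
  ext j
  rw [mem_matchSetM]
  unfold matchSet
  rw [Finset.mem_filter]
  constructor
  · rintro ⟨hjM, hp⟩
    exact ⟨hjM, fun h => hp _ _⟩
  · rintro ⟨hjM, hp⟩
    refine ⟨hjM, fun hR hR' => ?_⟩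
    exact hp hjM

lemma weight_eq (n : ℕ) (hn : 1 ≤ n) (mm s : ℕ) (hs : s ≤ mm) :
    ((n : ℝ) ^ mm)⁻¹ * ((n : ℝ) ^ mm)⁻¹ * ((n ^ s * (n * n - n) ^ (mm - s) : ℕ) : ℝ)
      = (1 - (n : ℝ)⁻¹) ^ (mm - s) * ((n : ℝ)⁻¹) ^ s := by
  have hn0 : (n : ℝ) ≠ 0 := Nat.cast_ne_zero.mpr (by omega)
  have hle : n ≤ n * n := Nat.le_mul_of_pos_left n (by omega)
  rw [Nat.cast_mul, Nat.cast_pow, Nat.cast_pow, Nat.cast_sub hle, Nat.cast_mul]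
  have h3 : (n : ℝ) * n - n = (n * n) * (1 - (n : ℝ)⁻¹) := by field_simp
  rw [h3, mul_pow, mul_pow (n : ℝ) (n : ℝ) (mm - s), inv_pow]
  have hpow : (n : ℝ) ^ (mm - s) * (n : ℝ) ^ s = (n : ℝ) ^ mm := by
    rw [← pow_add, Nat.sub_add_cancel hs]
  rw [← hpow]
  have h1 : (n : ℝ) ^ (mm - s) ≠ 0 := pow_ne_zero _ hn0
  have h2 : (n : ℝ) ^ s ≠ 0 := pow_ne_zero _ hn0
  field_simp

lemma count_match (n : ℕ) (hn : 1 ≤ n) (M : Finset I) (f : Finset I → ℝ) :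
    ((n : ℝ) ^ M.card)⁻¹ * (((n : ℝ) ^ M.card)⁻¹ *
      ∑ u : M → Fin n, ∑ u' : M → Fin n, f (matchSetM n M u u'))
    = ∑ S ∈ M.powerset,
        (1 - (n : ℝ)⁻¹) ^ (M.card - S.card) * ((n : ℝ)⁻¹) ^ S.card * f S := by
  classical
  set Φ : (M → Fin n × Fin n) → Finset I :=
    fun v => matchSetM n M (fun j => (v j).1) (fun j => (v j).2) with hΦ_def
  have hpair : ∑ u : M → Fin n, ∑ u' : M → Fin n, f (matchSetM n M u u')
      = ∑ v : M → Fin n × Fin n, f (Φ v) := by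
    have e1 : ∑ p : (M → Fin n) × (M → Fin n), f (matchSetM n M p.1 p.2)
        = ∑ u : M → Fin n, ∑ u' : M → Fin n, f (matchSetM n M u u') :=
      Fintype.sum_prod_type _
    have e2 : ∑ v : M → Fin n × Fin n, f (Φ v)
        = ∑ p : (M → Fin n) × (M → Fin n), f (matchSetM n M p.1 p.2) :=
      Equiv.sum_comp (Equiv.arrowProdEquivProdArrow M (fun _ => Fin n) (fun _ => Fin n))
        (fun p : ((M → Fin n) × (M → Fin n)) => f (matchSetM n M p.1 p.2))
    rw [e2, e1]
  have hmaps : ∀ v, Φ v ∈ M.powerset :=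
    fun v => Finset.mem_powerset.2 (Finset.filter_subset _ _)
  -- cardinalities of the diagonal and off-diagonal
  have hdiag : (univ.filter (fun q : Fin n × Fin n => q.1 = q.2)).card = n := by
    rw [show (univ.filter (fun q : Fin n × Fin n => q.1 = q.2))
        = univ.image (fun a : Fin n => (a, a)) from by
      ext q
      simp only [Finset.mem_filter, Finset.mem_image, mem_univ, true_and]
      constructor
      · intro h; exact ⟨q.1, by rw [Prod.mk.injEq]; exact ⟨rfl, h⟩⟩
      · rintro ⟨a, rfl⟩; rfl]
    rw [Finset.card_image_of_injective _ (fun a b h => (Prod.mk.injEq a a b b).mp h |>.1),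
      Finset.card_univ, Fintype.card_fin]
  have htot : (univ.filter (fun q : Fin n × Fin n => q.1 = q.2)).card
      + (univ.filter (fun q : Fin n × Fin n => ¬ q.1 = q.2)).card = n * n := by
    rw [Finset.card_filter_add_card_filter_not, Finset.card_univ,
      Fintype.card_prod, Fintype.card_fin]
  have hoff : (univ.filter (fun q : Fin n × Fin n => ¬ q.1 = q.2)).card = n * n - n := by
    omega
  -- each fiber of Φ is a `piFinset`
  have hfibcard : ∀ S ∈ M.powerset, (univ.filter fun v : M → Fin n × Fin n => Φ v = S).card
      = n ^ S.card * (n * n - n) ^ (M.card - S.card) := by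
    intro S hS
    have hSM : S ⊆ M := Finset.mem_powerset.1 hS
    have hfiber : (univ.filter fun v : M → Fin n × Fin n => Φ v = S)
        = Fintype.piFinset (fun j : M =>
            if (j : I) ∈ S then univ.filter (fun q : Fin n × Fin n => q.1 = q.2)
            else univ.filter (fun q : Fin n × Fin n => ¬ q.1 = q.2)) := by
      ext v
      rw [Finset.mem_filter, Fintype.mem_piFinset]
      constructor
      · rintro ⟨-, hv⟩ j
        by_cases hjS : (j : I) ∈ S
        · rw [if_pos hjS]
          have hj : (j : I) ∈ Φ v := by rw [hv]; exact hjS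
          rw [hΦ_def] at hj
          rw [mem_matchSetM] at hj
          exact Finset.mem_filter.2 ⟨mem_univ _, hj.2 j.2⟩
        · rw [if_neg hjS]
          have hj : (j : I) ∉ Φ v := by rw [hv]; exact hjS
          rw [hΦ_def] at hj
          rw [mem_matchSetM] at hj
          refine Finset.mem_filter.2 ⟨mem_univ _, fun hc => hj ⟨j.2, fun h => hc⟩⟩
      · intro hv
        refine ⟨mem_univ _, ?_⟩
        ext j'
        rw [hΦ_def]
        rw [mem_matchSetM]
        constructor
        · rintro ⟨hj'M, hp⟩
          by_contra hj'S
          have hth := hv ⟨j', hj'M⟩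
          rw [if_neg hj'S, Finset.mem_filter] at hth
          exact hth.2 (hp hj'M)
        · intro hj'S
          have hj'M : j' ∈ M := hSM hj'S
          have hth := hv ⟨j', hj'M⟩
          rw [if_pos hj'S, Finset.mem_filter] at hth
          exact ⟨hj'M, fun h => hth.2⟩
    rw [hfiber, Fintype.card_piFinset]
    simp only [apply_ite Finset.card]
    rw [Finset.prod_ite (fun _ => (univ.filter (fun q : Fin n × Fin n => q.1 = q.2)).card)
      (fun _ => (univ.filter (fun q : Fin n × Fin n => ¬ q.1 = q.2)).card)]
    rw [Finset.prod_const, Finset.prod_const, hdiag, hoff]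
    have hc1 : (univ.filter fun j : M => (j : I) ∈ S).card = S.card := by
      refine Finset.card_bij (fun j _ => (j : I)) ?_ ?_ ?_
      · intro j hj; exact (Finset.mem_filter.1 hj).2
      · intro j₁ h₁ j₂ h₂ h; exact Subtype.ext h
      · intro s hs
        exact ⟨⟨s, hSM hs⟩, Finset.mem_filter.2 ⟨mem_univ _, hs⟩, rfl⟩
    have hc2 : (univ.filter fun j : M => ¬ (j : I) ∈ S).card = M.card - S.card := by
      have hth := Finset.card_filter_add_card_filter_not
        (s := (univ : Finset {x // x ∈ M})) (p := fun j : M => (j : I) ∈ S)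
      rw [Finset.card_univ, Fintype.card_coe] at hth
      omega
    rw [hc1, hc2]
  -- sum over fibers
  have hfibsum : ∑ v : M → Fin n × Fin n, f (Φ v)
      = ∑ S ∈ M.powerset,
          ((n ^ S.card * (n * n - n) ^ (M.card - S.card) : ℕ) : ℝ) * f S := by
    rw [← Finset.sum_fiberwise_of_maps_to (fun v _ => hmaps v) (fun v => f (Φ v))]
    refine Finset.sum_congr rfl fun S hS => ?_
    have h1 : ∀ v ∈ univ.filter fun v : M → Fin n × Fin n => Φ v = S,
        f (Φ v) = f S := fun v hv => by rw [(Finset.mem_filter.1 hv).2]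
    rw [Finset.sum_congr rfl h1, Finset.sum_const, hfibcard S hS, nsmul_eq_mul]
  rw [hpair, hfibsum, Finset.mul_sum, Finset.mul_sum]
  refine Finset.sum_congr rfl fun S hS => ?_
  have hsM : S.card ≤ M.card := Finset.card_le_card (Finset.mem_powerset.1 hS)
  rw [← weight_eq n hn M.card S.card hsM]
  ring
/-! ### Integrals over the uniform measure -/

instance sampMSC (n : ℕ) (m : I → ℕ) (U : Finset I) :
    MeasurableSingletonClass (Samp n m U) :=
  ⟨fun _ => MeasurableSpace.measurableSet_top⟩

lemma integral_unif (n : ℕ) (m : I → ℕ) (U : Finset I) (f : Samp n m U → ℝ) :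
    ∫ ω, f ω ∂unif n m U
      = (Fintype.card (Samp n m U) : ℝ)⁻¹ * ∑ ω, f ω := by
  rw [unif, integral_smul_measure,
    MeasureTheory.integral_fintype (Integrable.of_finite)]
  simp [Measure.real, Measure.count_singleton, smul_eq_mul, Finset.mul_sum]

lemma integral_est (n : ℕ) (hn : 1 ≤ n) (m : I → ℕ) (hm : ∀ j, 1 ≤ m j) {U : Finset I}
    (T : Finset I) (hTU : T ⊆ U) (ρB : Blk m T → ℝ) :
    ∫ ω, est n m T hTU ρB ω ∂unif n m U = blkMean m T ρB := by
  rw [integral_unif]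
  have h1 : ∑ ω : Samp n m U, est n m T hTU ρB ω
      = ((n : ℝ) ^ T.card)⁻¹ *
          ∑ i : T → Fin n, ∑ ω : Samp n m U, ρB (evalS n m T hTU i ω) := by
    rw [Finset.sum_congr rfl fun ω _ => est_eq n m T hTU ρB ω, ← Finset.mul_sum,
      Finset.sum_comm]
  rw [h1, Finset.mul_sum, Finset.mul_sum]
  have h2 : ∀ i : T → Fin n,
      (Fintype.card (Samp n m U) : ℝ)⁻¹ *
        (((n : ℝ) ^ T.card)⁻¹ * ∑ ω : Samp n m U, ρB (evalS n m T hTU i ω))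
      = ((n : ℝ) ^ T.card)⁻¹ * blkMean m T ρB := by
    intro i
    have := eval_avg n m hm T hTU i ρB
    rw [show (Fintype.card (Samp n m U) : ℝ)⁻¹ *
        (((n : ℝ) ^ T.card)⁻¹ * ∑ ω : Samp n m U, ρB (evalS n m T hTU i ω))
      = ((n : ℝ) ^ T.card)⁻¹ * ((Fintype.card (Samp n m U) : ℝ)⁻¹ *
          ∑ ω : Samp n m U, ρB (evalS n m T hTU i ω)) by ring, this]
    rfl
  rw [Finset.sum_congr rfl fun i _ => h2 i, Finset.sum_const, Finset.card_univ,
    Fintype.card_fun, Fintype.card_fin, Fintype.card_coe, nsmul_eq_mul]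
  push_cast
  have hpow : ((n : ℝ)) ^ T.card ≠ 0 := pow_ne_zero _ (Nat.cast_ne_zero.mpr (by omega))
  field_simp

lemma Ssq_powerset (n : ℕ) (m : I → ℕ) (T M : Finset I) (ρB : Blk m T → ℝ) :
    Ssq n m T ρB M
      = ∑ S ∈ M.powerset,
          (1 - (n : ℝ)⁻¹) ^ (M.card - S.card) * ((n : ℝ)⁻¹) ^ S.card
            * sigmaSq m T ρB S := by
  classical
  have hmaps : ∀ S ∈ M.powerset, S.card ∈ Finset.range (M.card + 1) := fun S hS =>
    Finset.mem_range.2 (Nat.lt_succ_of_le (Finset.card_le_card (Finset.mem_powerset.1 hS)))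
  rw [← Finset.sum_fiberwise_of_maps_to hmaps (fun S =>
    (1 - (n : ℝ)⁻¹) ^ (M.card - S.card) * ((n : ℝ)⁻¹) ^ S.card * sigmaSq m T ρB S)]
  have hsplit : Finset.range (M.card + 1) = insert 0 (Finset.Icc 1 M.card) := by
    ext r
    simp only [Finset.mem_range, Finset.mem_insert, Finset.mem_Icc]
    omega
  rw [hsplit, Finset.sum_insert (by simp)]
  have hzero : ∑ S ∈ M.powerset.filter (fun S => S.card = 0),
      (1 - (n : ℝ)⁻¹) ^ (M.card - S.card) * ((n : ℝ)⁻¹) ^ S.card * sigmaSq m T ρB S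
      = 0 := by
    have hsingle : M.powerset.filter (fun S => S.card = 0) = {∅} := by
      ext S
      simp only [Finset.mem_filter, Finset.mem_powerset, Finset.mem_singleton,
        Finset.card_eq_zero]
      constructor
      · rintro ⟨-, h⟩; exact h
      · rintro rfl; exact ⟨Finset.empty_subset M, rfl⟩
    rw [hsingle, Finset.sum_singleton, sigmaSq_empty]
    ring
  rw [hzero, zero_add, Ssq]
  refine Finset.sum_congr rfl fun r hr => ?_
  rw [Finset.mul_sum]
  refine Finset.sum_congr rfl fun S hS => ?_
  rw [(Finset.mem_filter.1 hS).2]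
/-- `|Cov(ρ_n, ρ'_n)| ≤ √(S_ρ²(m,n) · S_{ρ'}²(m,n))`. -/
theorem stmt8 {I : Type} [Fintype I] [DecidableEq I]
    (n : ℕ) (hn : 1 ≤ n) (m : I → ℕ) (hm : ∀ j, 1 ≤ m j) (R R' : Finset I)
    (hK : 1 ≤ R.card) (hK' : 1 ≤ R'.card) (hm1 : 1 ≤ (R ∩ R').card)
    (ρB : Blk m R → ℝ) (ρB' : Blk m R' → ℝ) :
    |cov (unif n m (R ∪ R'))
        (est n m R Finset.subset_union_left ρB)
        (est n m R' Finset.subset_union_right ρB')|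
      ≤ Real.sqrt (Ssq n m R ρB (R ∩ R') * Ssq n m R' ρB' (R ∩ R')) := by
  classical
  have hn0 : (n : ℝ) ≠ 0 := Nat.cast_ne_zero.mpr (by omega)
  have hEX : ∫ x, est n m R Finset.subset_union_left ρB x ∂unif n m (R ∪ R')
      = blkMean m R ρB := integral_est n hn m hm R Finset.subset_union_left ρB
  have hEY : ∫ x, est n m R' Finset.subset_union_right ρB' x ∂unif n m (R ∪ R')
      = blkMean m R' ρB' := integral_est n hn m hm R' Finset.subset_union_right ρB'
  -- Step 1: the covariance as a sum over pairs of index tuples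
  have hXsub : ∀ ω : Samp n m (R ∪ R'),
      est n m R Finset.subset_union_left ρB ω - blkMean m R ρB
      = ((n : ℝ) ^ R.card)⁻¹ * ∑ i : R → Fin n,
          (ρB (evalS n m R Finset.subset_union_left i ω) - blkMean m R ρB) := by
    intro ω
    rw [est_eq, Finset.sum_sub_distrib, Finset.sum_const, Finset.card_univ,
      Fintype.card_fun, Fintype.card_fin, Fintype.card_coe, nsmul_eq_mul]
    push_cast
    have hpow : ((n : ℝ)) ^ R.card ≠ 0 := pow_ne_zero _ hn0
    field_simp
  have hYsub : ∀ ω : Samp n m (R ∪ R'),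
      est n m R' Finset.subset_union_right ρB' ω - blkMean m R' ρB'
      = ((n : ℝ) ^ R'.card)⁻¹ * ∑ i' : R' → Fin n,
          (ρB' (evalS n m R' Finset.subset_union_right i' ω) - blkMean m R' ρB') := by
    intro ω
    rw [est_eq, Finset.sum_sub_distrib, Finset.sum_const, Finset.card_univ,
      Fintype.card_fun, Fintype.card_fin, Fintype.card_coe, nsmul_eq_mul]
    push_cast
    have hpow : ((n : ℝ)) ^ R'.card ≠ 0 := pow_ne_zero _ hn0
    field_simp
  have hpa : ∀ (i : R → Fin n) (i' : R' → Fin n),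
      (Fintype.card (Samp n m (R ∪ R')) : ℝ)⁻¹ *
        ∑ ω : Samp n m (R ∪ R'),
          (ρB (evalS n m R Finset.subset_union_left i ω) - blkMean m R ρB) *
          (ρB' (evalS n m R' Finset.subset_union_right i' ω) - blkMean m R' ρB')
      = covS m R R' ρB ρB' (matchSet n R R' i i') := fun i i' =>
    (pair_avg n m hm R R' i i'
      (fun p => (ρB p.1 - blkMean m R ρB) * (ρB' p.2 - blkMean m R' ρB'))).trans
      (FF_avg n m hm R R' i i' ρB ρB')
  have hcovsum : cov (unif n m (R ∪ R'))
      (est n m R Finset.subset_union_left ρB)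
      (est n m R' Finset.subset_union_right ρB')
      = ((n : ℝ) ^ R.card)⁻¹ * (((n : ℝ) ^ R'.card)⁻¹ *
          ∑ i : R → Fin n, ∑ i' : R' → Fin n,
            covS m R R' ρB ρB' (matchSet n R R' i i')) := by
    rw [cov, hEX, hEY, integral_unif]
    have hprod : ∀ ω : Samp n m (R ∪ R'),
        (est n m R Finset.subset_union_left ρB ω - blkMean m R ρB) *
        (est n m R' Finset.subset_union_right ρB' ω - blkMean m R' ρB')
        = ((n : ℝ) ^ R.card)⁻¹ * (((n : ℝ) ^ R'.card)⁻¹ *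
            ∑ i : R → Fin n, ∑ i' : R' → Fin n,
              (ρB (evalS n m R Finset.subset_union_left i ω) - blkMean m R ρB) *
              (ρB' (evalS n m R' Finset.subset_union_right i' ω) - blkMean m R' ρB')) := by
      intro ω
      rw [hXsub ω, hYsub ω, mul_mul_mul_comm, Finset.sum_mul_sum]
      ring
    rw [Finset.sum_congr rfl fun ω _ => hprod ω, ← Finset.mul_sum, ← Finset.mul_sum]
    have hsw : ∑ ω : Samp n m (R ∪ R'), ∑ i : R → Fin n, ∑ i' : R' → Fin n,
          (ρB (evalS n m R Finset.subset_union_left i ω) - blkMean m R ρB) *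
              (ρB' (evalS n m R' Finset.subset_union_right i' ω) - blkMean m R' ρB')
        = ∑ i : R → Fin n, ∑ i' : R' → Fin n, ∑ ω : Samp n m (R ∪ R'),
          (ρB (evalS n m R Finset.subset_union_left i ω) - blkMean m R ρB) *
              (ρB' (evalS n m R' Finset.subset_union_right i' ω) - blkMean m R' ρB') := by
      rw [Finset.sum_comm]
      exact Finset.sum_congr rfl fun i _ => Finset.sum_comm
    rw [hsw]
    have hc0 : ∀ i : R → Fin n,
        ∑ i' : R' → Fin n, covS m R R' ρB ρB' (matchSet n R R' i i')
        = (Fintype.card (Samp n m (R ∪ R')) : ℝ)⁻¹ *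
            ∑ i' : R' → Fin n, ∑ ω : Samp n m (R ∪ R'),
          (ρB (evalS n m R Finset.subset_union_left i ω) - blkMean m R ρB) *
              (ρB' (evalS n m R' Finset.subset_union_right i' ω) - blkMean m R' ρB') := by
      intro i
      rw [Finset.mul_sum]
      exact Finset.sum_congr rfl fun i' _ => (hpa i i').symm
    rw [Finset.sum_congr rfl fun i _ => hc0 i, ← Finset.mul_sum]
    ring
  -- Step 2: reduce to index tuples on `M = R ∩ R'`
  set M : Finset I := R ∩ R' with hM_def
  have hcov2 : cov (unif n m (R ∪ R'))
      (est n m R Finset.subset_union_left ρB)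
      (est n m R' Finset.subset_union_right ρB')
      = ((n : ℝ) ^ M.card)⁻¹ * (((n : ℝ) ^ M.card)⁻¹ *
          ∑ u : M → Fin n, ∑ u' : M → Fin n,
            covS m R R' ρB ρB' (matchSetM n M u u')) := by
    rw [hcovsum]
    have hmm : ∀ (i : R → Fin n) (i' : R' → Fin n),
        covS m R R' ρB ρB' (matchSet n R R' i i')
        = covS m R R' ρB ρB' (matchSetM n M
            (fun j : M => i ⟨j, Finset.inter_subset_left j.2⟩)
            (fun j : M => i' ⟨j, Finset.inter_subset_right j.2⟩)) := fun i i' => by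
      rw [matchSet_eq_matchSetM]
    -- reduce the inner sum
    have hstep1 : ∀ i : R → Fin n,
        ((n : ℝ) ^ R'.card)⁻¹ * ∑ i' : R' → Fin n,
          covS m R R' ρB ρB' (matchSet n R R' i i')
        = ((n : ℝ) ^ M.card)⁻¹ * ∑ u' : M → Fin n,
            covS m R R' ρB ρB' (matchSetM n M
              (fun j : M => i ⟨j, Finset.inter_subset_left j.2⟩) u') := by
      intro i
      rw [Finset.sum_congr rfl fun i' _ => hmm i i']
      exact restrict_avg n hn R' M Finset.inter_subset_right
        (fun u' => covS m R R' ρB ρB' (matchSetM n M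
          (fun j : M => i ⟨j, Finset.inter_subset_left j.2⟩) u'))
    have hstep2 : ∀ u' : M → Fin n,
        ((n : ℝ) ^ R.card)⁻¹ * ∑ i : R → Fin n,
          covS m R R' ρB ρB' (matchSetM n M
            (fun j : M => i ⟨j, Finset.inter_subset_left j.2⟩) u')
        = ((n : ℝ) ^ M.card)⁻¹ * ∑ u : M → Fin n,
            covS m R R' ρB ρB' (matchSetM n M u u') := fun u' =>
      restrict_avg n hn R M Finset.inter_subset_left
        (fun u => covS m R R' ρB ρB' (matchSetM n M u u'))
    calc ((n : ℝ) ^ R.card)⁻¹ * (((n : ℝ) ^ R'.card)⁻¹ *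
          ∑ i : R → Fin n, ∑ i' : R' → Fin n,
            covS m R R' ρB ρB' (matchSet n R R' i i'))
        = ((n : ℝ) ^ R.card)⁻¹ * ∑ i : R → Fin n,
            (((n : ℝ) ^ R'.card)⁻¹ * ∑ i' : R' → Fin n,
              covS m R R' ρB ρB' (matchSet n R R' i i')) := by
          rw [← Finset.mul_sum]
      _ = ((n : ℝ) ^ R.card)⁻¹ * ∑ i : R → Fin n,
            (((n : ℝ) ^ M.card)⁻¹ * ∑ u' : M → Fin n,
              covS m R R' ρB ρB' (matchSetM n M
                (fun j : M => i ⟨j, Finset.inter_subset_left j.2⟩) u')) := by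
          rw [Finset.sum_congr rfl fun i _ => hstep1 i]
      _ = ((n : ℝ) ^ M.card)⁻¹ * ∑ u' : M → Fin n,
            (((n : ℝ) ^ R.card)⁻¹ * ∑ i : R → Fin n,
              covS m R R' ρB ρB' (matchSetM n M
                (fun j : M => i ⟨j, Finset.inter_subset_left j.2⟩) u')) := by
          simp only [← Finset.mul_sum]
          rw [Finset.sum_comm]
          ring
      _ = ((n : ℝ) ^ M.card)⁻¹ * ∑ u' : M → Fin n,
            (((n : ℝ) ^ M.card)⁻¹ * ∑ u : M → Fin n,
              covS m R R' ρB ρB' (matchSetM n M u u')) := by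
          rw [Finset.sum_congr rfl fun u' _ => hstep2 u']
      _ = ((n : ℝ) ^ M.card)⁻¹ * (((n : ℝ) ^ M.card)⁻¹ *
            ∑ u : M → Fin n, ∑ u' : M → Fin n,
              covS m R R' ρB ρB' (matchSetM n M u u')) := by
          simp only [← Finset.mul_sum]
          rw [Finset.sum_comm]
  -- Step 3: the powerset decomposition
  have hcov3 : cov (unif n m (R ∪ R'))
      (est n m R Finset.subset_union_left ρB)
      (est n m R' Finset.subset_union_right ρB')
      = ∑ S ∈ M.powerset,
          (1 - (n : ℝ)⁻¹) ^ (M.card - S.card) * ((n : ℝ)⁻¹) ^ S.card *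
            covS m R R' ρB ρB' S := by
    rw [hcov2, count_match n hn M (covS m R R' ρB ρB')]
  -- Step 4: the Cauchy–Schwarz estimates
  have hwnn : ∀ S : Finset I,
      0 ≤ (1 - (n : ℝ)⁻¹) ^ (M.card - S.card) * ((n : ℝ)⁻¹) ^ S.card := by
    intro S
    have h1 : (n : ℝ)⁻¹ ≤ 1 := by
      rw [inv_le_one_iff₀]
      right
      exact_mod_cast hn
    have h2 : (0 : ℝ) ≤ 1 - (n : ℝ)⁻¹ := by linarith
    exact mul_nonneg (pow_nonneg h2 _) (pow_nonneg (by positivity) _)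
  rw [hcov3]
  calc |∑ S ∈ M.powerset,
        (1 - (n : ℝ)⁻¹) ^ (M.card - S.card) * ((n : ℝ)⁻¹) ^ S.card *
          covS m R R' ρB ρB' S|
      ≤ ∑ S ∈ M.powerset,
          |(1 - (n : ℝ)⁻¹) ^ (M.card - S.card) * ((n : ℝ)⁻¹) ^ S.card *
            covS m R R' ρB ρB' S| := Finset.abs_sum_le_sum_abs _ _
    _ ≤ ∑ S ∈ M.powerset,
          Real.sqrt (((1 - (n : ℝ)⁻¹) ^ (M.card - S.card) * ((n : ℝ)⁻¹) ^ S.card *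
              sigmaSq m R ρB S) *
            ((1 - (n : ℝ)⁻¹) ^ (M.card - S.card) * ((n : ℝ)⁻¹) ^ S.card *
              sigmaSq m R' ρB' S)) := by
        refine Finset.sum_le_sum fun S _ => ?_
        rw [abs_mul, abs_of_nonneg (hwnn S)]
        set w : ℝ := (1 - (n : ℝ)⁻¹) ^ (M.card - S.card) * ((n : ℝ)⁻¹) ^ S.card with hw_def
        calc w * |covS m R R' ρB ρB' S|
            ≤ w * Real.sqrt (sigmaSq m R ρB S * sigmaSq m R' ρB' S) :=
              mul_le_mul_of_nonneg_left (abs_covS_le m R R' ρB ρB' S) (hwnn S)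
          _ = Real.sqrt ((w * sigmaSq m R ρB S) * (w * sigmaSq m R' ρB' S)) := by
              rw [show (w * sigmaSq m R ρB S) * (w * sigmaSq m R' ρB' S)
                  = w ^ 2 * (sigmaSq m R ρB S * sigmaSq m R' ρB' S) by ring,
                Real.sqrt_mul (sq_nonneg w), Real.sqrt_sq (hwnn S)]
    _ ≤ Real.sqrt ((∑ S ∈ M.powerset,
            (1 - (n : ℝ)⁻¹) ^ (M.card - S.card) * ((n : ℝ)⁻¹) ^ S.card *
              sigmaSq m R ρB S) *
          (∑ S ∈ M.powerset,
            (1 - (n : ℝ)⁻¹) ^ (M.card - S.card) * ((n : ℝ)⁻¹) ^ S.card *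
              sigmaSq m R' ρB' S)) :=
        sum_sqrt_mul_le _ _ _
          (fun S _ => mul_nonneg (hwnn S) (sigmaSq_nonneg m R ρB S))
          (fun S _ => mul_nonneg (hwnn S) (sigmaSq_nonneg m R' ρB' S))
    _ = Real.sqrt (Ssq n m R ρB M * Ssq n m R' ρB' M) := by
        rw [Ssq_powerset, Ssq_powerset]

end
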